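/- arXiv:math/0308020 — 4 statements merged into one kernel-verified Lean document; each statement's English description precedes it below -/
import Mathlib

section
/- For r ∈ (0,1], the point x₁ = (√(9-4r) - (3-2r))/(2r) lies in (1/2, 1] and satisfies F_{r,1}(x₁) = x₁, where F_{r,1}(x) = (2-r)(1-x)/(1-r+rx). -/
theorem stmt_2 (r : ℝ) (hr : r ∈ Set.Ioc (0:ℝ) 1) :
    (Real.sqrt (9 - 4 * r) - (3 - 2 * r)) / (2 * r) ∈ Set.Ioc (1/2 : ℝ) 1 ∧
    (2 - r) * (1 - (Real.sqrt (9 - 4 * r) - (3 - 2 * r)) / (2 * r)) /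
      (1 - r + r * ((Real.sqrt (9 - 4 * r) - (3 - 2 * r)) / (2 * r))) =
      (Real.sqrt (9 - 4 * r) - (3 - 2 * r)) / (2 * r) := by
  obtain ⟨hr0, hr1⟩ := hr
  set s := Real.sqrt (9 - 4 * r) with hs
  have hnn : (0:ℝ) ≤ 9 - 4 * r := by linarith
  have hs2 : s ^ 2 = 9 - 4 * r := Real.sq_sqrt hnn
  have hsle : s ≤ 3 := by
    rw [hs, show (3:ℝ) = Real.sqrt 9 by
      rw [show (9:ℝ) = 3^2 by norm_num, Real.sqrt_sq (by norm_num)]]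
    exact Real.sqrt_le_sqrt (by linarith)
  have hsgt : 3 - r < s := by
    have h1 : (3 - r)^2 < 9 - 4 * r := by nlinarith
    nlinarith [Real.sqrt_nonneg (9 - 4*r), hs2]
  have hs1 : 1 < s := by linarith
  have h2r : (2:ℝ) * r ≠ 0 := by positivity
  constructor
  · constructor
    · rw [lt_div_iff₀ (by positivity)]
      linarith
    · rw [div_le_one (by positivity)]
      linarith
  · have hden : 1 - r + r * ((s - (3 - 2 * r)) / (2 * r)) = (s - 1) / 2 := by
      field_simp
      ring
    rw [hden]
    rw [div_eq_div_iff (by linarith) (by positivity)]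
    have : 1 - (s - (3 - 2 * r)) / (2 * r) = (3 - s) / (2 * r) := by
      field_simp
      ring
    rw [this]
    field_simp
    nlinarith [hs2]
end

section
/- For every r ∈ [0,1], the function Φ_{r,0}(x) = x/((2-r) + rx) is a fixed point of the renormalisation operator R_r defined by (R_r Ψ)(x) = α·Ψ(Ψ(x/β)) with α = 3-r and β = (3-r)/(2-r); that is, α·Φ_{r,0}(Φ_{r,0}(x/β)) = Φ_{r,0}(x) for all x ≥ 0. Moreover Φ_{r,0}(0) = 0 and Φ_{r,0}'(0) = 1/(2-r). -/
/-!
Maps of the form `y ↦ y / (a + b y)` compose like the lower triangular matrices `[[1, 0], [b, a]]`,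
so `Φ_{r,0} ∘ Φ_{r,0}` is `y ↦ y / (ρ² + r (ρ + 1) y)`. Since `α = ρ + 1` and `x / β = ρ x / α`,
the factor `α` cancels after substituting `x / β`, leaving `Φ_{r,0}(x)`.
-/

lemma div_add_mul_div_comp {a b c d y : ℝ} (hy : a + b * y ≠ 0) :
    y / (a + b * y) / (c + d * (y / (a + b * y))) = y / (c * a + (c * b + d) * y) := by
  rw [show c + d * (y / (a + b * y)) = (c * (a + b * y) + d * y) / (a + b * y) by
      rw [add_div, mul_div_cancel_right₀ _ hy, mul_div_assoc],
    div_div_div_cancel_right₀ hy]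
  ring_nf

lemma div_add_mul_self_comp {ρ r y : ℝ} (hy : ρ + r * y ≠ 0) :
    y / (ρ + r * y) / (ρ + r * (y / (ρ + r * y))) = y / (ρ ^ 2 + r * (ρ + 1) * y) := by
  rw [div_add_mul_div_comp hy]
  ring_nf

lemma add_one_mul_div_add_mul_self_comp {ρ r x : ℝ} (hρ : 0 < ρ) (hr : 0 ≤ r) (hx : 0 ≤ x) :
    (ρ + 1) * (fun y => y / (ρ + r * y)) ((fun y => y / (ρ + r * y)) (x / ((ρ + 1) / ρ)))
      = x / (ρ + r * x) := by
  simp only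
  rw [div_add_mul_self_comp (by positivity)]
  have hx' : 0 < ρ + r * x := by positivity
  field_simp

lemma hasDerivAt_div_add_mul {ρ r y : ℝ} (hy : ρ + r * y ≠ 0) :
    HasDerivAt (fun y => y / (ρ + r * y)) (ρ / (ρ + r * y) ^ 2) y := by
  have hden : HasDerivAt (fun y => ρ + r * y) r y := by
    simpa using ((hasDerivAt_id y).const_mul r).const_add ρ
  exact ((hasDerivAt_id' y).div hden hy).congr_deriv (by ring)

theorem stmt_5 (r : ℝ) (hr : r ∈ Set.Icc (0:ℝ) 1) :
    (∀ x : ℝ, 0 ≤ x →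
      (3 - r) * (fun y => y / ((2 - r) + r * y))
        ((fun y => y / ((2 - r) + r * y)) (x / ((3 - r) / (2 - r))))
        = x / ((2 - r) + r * x)) ∧
    (0:ℝ) / ((2 - r) + r * 0) = 0 ∧
    HasDerivAt (fun y => y / ((2 - r) + r * y)) (1 / (2 - r)) 0 := by
  obtain ⟨hr0, hr1⟩ := hr
  have hρ : (0:ℝ) < 2 - r := by linarith
  have hα : (3:ℝ) - r = (2 - r) + 1 := by ring
  refine ⟨fun x hx => ?_, zero_div _, ?_⟩
  · rw [hα]
    exact add_one_mul_div_add_mul_self_comp hρ hr0 hx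
  · refine (hasDerivAt_div_add_mul (by simpa using hρ.ne')).congr_deriv ?_
    simp only [mul_zero, add_zero]
    field_simp
end

section
/- For every r ∈ [0,1) and constant K > 0, the function e(x) = K/(1-r+rx) satisfies the Perron–Frobenius fixed point equation (ρ/(ρ+rx)²)·[e(x/(ρ+rx)) + e(1 - x/(ρ+rx))] = e(x) for all x ∈ [0,1], where ρ = 2-r. -/
theorem stmt_6 (r : ℝ) (hr : r ∈ Set.Ico (0:ℝ) 1) (K : ℝ) (hK : 0 < K)
    (x : ℝ) (hx : x ∈ Set.Icc (0:ℝ) 1) :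
    ((2 - r) / ((2 - r) + r * x) ^ 2) *
      (K / (1 - r + r * (x / ((2 - r) + r * x))) +
       K / (1 - r + r * (1 - x / ((2 - r) + r * x))))
    = K / (1 - r + r * x) := by
  obtain ⟨hr0, hr1⟩ := hr
  obtain ⟨hx0, hx1⟩ := hx
  have hA : (0:ℝ) < (2 - r) + r * x := by nlinarith
  have h1 : (0:ℝ) < 1 - r + r * x := by nlinarith
  have h2 : (0:ℝ) < 2 - r := by linarith
  have e1 : 1 - r + r * (x / ((2 - r) + r * x))
      = (2 - r) * (1 - r + r * x) / ((2 - r) + r * x) := by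
    field_simp
    ring
  have e2 : 1 - r + r * (1 - x / ((2 - r) + r * x))
      = (2 - r) / ((2 - r) + r * x) := by
    field_simp
    ring
  rw [e1, e2]
  rw [div_div_eq_mul_div, div_div_eq_mul_div]
  field_simp
  ring
end

section
/- For r ∈ [0,1), ρ = 2−r, δ = 1−r, and k ≥ 1, the function φ_k(t) = t^{k−1}·e^{−(r/δ)t} satisfies the eigenvalue equation M_r φ_k = ρ^{−k} φ_k, where (M_r φ)(t) = (1/ρ)·e^{−(r/ρ)t}·φ(t/ρ). -/
/-!
The exponential weight `e^{-ct}` of the operator combines with `e^{-a t/ρ}` into `e^{-a t}`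
exactly when `c + a/ρ = a`, and the dilation `t ↦ t/ρ` rescales `t^m` by `ρ^{-m}`; so
`t^m e^{-at}` is an eigenfunction with eigenvalue `ρ^{-(m+1)}`. For `M_r` one has `ρ = 2 - r`,
`c = r/ρ`, `a = r/δ`, and the balance condition is `r/ρ + r/(δρ) = r/δ`.
-/

open Real

noncomputable def weightedDilation (ρ c : ℝ) (φ : ℝ → ℝ) (t : ℝ) : ℝ :=
  1 / ρ * exp (-c * t) * φ (t / ρ)

theorem weightedDilation_pow_mul_exp {ρ c a : ℝ} (hρ : ρ ≠ 0) (hca : c + a / ρ = a) (m : ℕ) :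
    weightedDilation ρ c (fun t => t ^ m * exp (-a * t)) =
      fun t => ρ ^ (-(m + 1 : ℤ)) * (t ^ m * exp (-a * t)) := by
  funext t
  have hexp : exp (-c * t) * exp (-a * (t / ρ)) = exp (-a * t) := by
    rw [← exp_add]
    congr 1
    linear_combination (-t) * hca
  rw [weightedDilation, ← hexp, zpow_neg, ← Nat.cast_succ, zpow_natCast, div_pow, pow_succ]
  field_simp

theorem stmt_12_general (r : ℝ) (hr : r ∈ Set.Ico (0:ℝ) 1) (k : ℕ) (hk : 1 ≤ k) (t : ℝ) :
    (1 / (2 - r)) * Real.exp (-(r / (2 - r)) * t) *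
        ((t / (2 - r)) ^ (k - 1) * Real.exp (-(r / (1 - r)) * (t / (2 - r))))
      = (2 - r) ^ (-(k : ℤ)) * (t ^ (k - 1) * Real.exp (-(r / (1 - r)) * t)) := by
  obtain ⟨m, rfl⟩ := Nat.exists_eq_add_of_le' hk
  have hρ : 2 - r ≠ 0 := by linarith [hr.2]
  have hδ : 1 - r ≠ 0 := by linarith [hr.2]
  have hbalance : r / (2 - r) + r / (1 - r) / (2 - r) = r / (1 - r) := by
    field_simp
    ring
  simp only [Nat.add_sub_cancel, Nat.cast_add, Nat.cast_one]
  exact congrFun (weightedDilation_pow_mul_exp hρ hbalance m) t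

theorem stmt_12 (r : ℝ) (hr : r ∈ Set.Ico (0:ℝ) 1) (k : ℕ) (hk : 1 ≤ k) (t : ℝ) (ht : 0 < t) :
    (1 / (2 - r)) * Real.exp (-(r / (2 - r)) * t) *
        ((t / (2 - r)) ^ (k - 1) * Real.exp (-(r / (1 - r)) * (t / (2 - r))))
      = (2 - r) ^ (-(k : ℤ)) * (t ^ (k - 1) * Real.exp (-(r / (1 - r)) * t)) :=
  stmt_12_general r hr k hk t
end
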